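/- Let S be a finitely generated reduced cancellative commutative monoid. The set of catenary degrees C(S) = {c(m) : m ∈ S} equals {0, c} for some c > 0 if and only if every Betti element of S has catenary degree c. -/

import Mathlib

/-- The set of factorizations of `n` in terms of the generators `gens`. -/
def ZsetM {S : Type*} [AddCancelCommMonoid S] {k : ℕ} (gens : Fin k → S) (n : S) :
    Set (Fin k → ℕ) :=
  {a | ∑ i, a i • gens i = n}

/-- The length of a factorization. -/
def flen {k : ℕ} (a : Fin k → ℕ) : ℕ := ∑ i, a i

/-- The distance between two factorizations:
`max (|a - gcd(a,b)|, |b - gcd(a,b)|)` (componentwise gcd = min). -/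
def fdist {k : ℕ} (a b : Fin k → ℕ) : ℕ :=
  max (∑ i, (a i - b i)) (∑ i, (b i - a i))

/-- There is an `N`-chain of factorizations within `Z` from `a` to `b`. -/
def IsNChain {k : ℕ} (Z : Set (Fin k → ℕ)) (N : ℕ) (a b : Fin k → ℕ) : Prop :=
  ∃ l : List (Fin k → ℕ), l.head? = some a ∧ l.getLast? = some b ∧
    (∀ x ∈ l, x ∈ Z) ∧ l.Chain' (fun x y => fdist x y ≤ N)

/-- The catenary degree of `n`: the least `N` such that any two factorizations
of `n` are connected by an `N`-chain. -/
noncomputable def catDegM {S : Type*} [AddCancelCommMonoid S] {k : ℕ}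
    (gens : Fin k → S) (n : S) : ℕ :=
  sInf {N | ∀ a ∈ ZsetM gens n, ∀ b ∈ ZsetM gens n, IsNChain (ZsetM gens n) N a b}

/-- `n` is a Betti element: the graph on `Z(n)` joining factorizations with
nonzero componentwise gcd is disconnected. -/
def IsBettiM {S : Type*} [AddCancelCommMonoid S] {k : ℕ} (gens : Fin k → S)
    (n : S) : Prop :=
  ∃ a ∈ ZsetM gens n, ∃ b ∈ ZsetM gens n,
    ¬ Relation.ReflTransGen
      (fun x y => x ∈ ZsetM gens n ∧ y ∈ ZsetM gens n ∧ ∃ i, min (x i) (y i) ≠ 0) a b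


/-!
If `n` is not a Betti element, any two of its factorizations are linked by steps between
factorizations sharing an atom; removing the common part of such a step reduces to an element
with shorter factorizations, so by induction `c(n)` is at most the largest catenary degree of a
Betti element. Conversely, let `z` be a factorization of `n` of maximal length and `y ≠ z`
another one. Removing their common part gives two distinct factorizations of an element which,
by the same descent, is a Betti element `b` plus something; `b` has a factorization of length
at least `c(b)`, and the maximality of `z` turns this into `|z - y| ≥ c(b)`. So `z` cannot be
left by a chain with steps smaller than the least catenary degree of a Betti element. Finally,
factorization sets are finite (an antichain in `ℕ^k`), so `c(n) = 0` exactly when `n` has a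
single factorization, which separates the value `0` from `c`.
-/

open Relation

variable {k : ℕ}

theorem Relation.ReflTransGen.exists_rel_ne {α : Type*} {r : α → α → Prop} {a b : α}
    (h : ReflTransGen r a b) (hab : a ≠ b) : ∃ x y, r x y ∧ x ≠ y := by
  by_contra! hr
  have : ReflTransGen (· = ·) a b := ReflTransGen.mono (fun x y hxy => hr x y hxy) _ _ h
  rw [reflTransGen_eq_self] at this
  exact hab this

theorem flen_add (a b : Fin k → ℕ) : flen (a + b) = flen a + flen b :=
  Finset.sum_add_distrib

theorem apply_le_flen (a : Fin k → ℕ) (i : Fin k) : a i ≤ flen a :=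
  Finset.single_le_sum (fun j _ => Nat.zero_le (a j)) (Finset.mem_univ i)

theorem tsub_add_inf_eq (a b : Fin k → ℕ) : a - b + a ⊓ b = a := by
  funext i
  simp only [Pi.add_apply, Pi.sub_apply, Pi.inf_apply]
  omega

theorem tsub_ne_tsub_of_ne {a b : Fin k → ℕ} (h : a ≠ b) : a - b ≠ b - a :=
  fun hab => h <| by
    rw [← tsub_add_inf_eq a b, hab, inf_comm, tsub_add_inf_eq]

theorem fdist_self (a : Fin k → ℕ) : fdist a a = 0 := by
  simp [fdist]

theorem eq_of_fdist_eq_zero {a b : Fin k → ℕ} (h : fdist a b = 0) : a = b := by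
  simp only [fdist, Nat.max_eq_zero_iff, Finset.sum_eq_zero_iff, Finset.mem_univ,
    true_implies] at h
  funext i
  have := h.1 i
  have := h.2 i
  omega

theorem fdist_add_right (a b w : Fin k → ℕ) : fdist (a + w) (b + w) = fdist a b := by
  simp only [fdist, Pi.add_apply, Nat.add_sub_add_right]

theorem fdist_le_max_flen (a b : Fin k → ℕ) : fdist a b ≤ max (flen a) (flen b) :=
  max_le_max (Finset.sum_le_sum fun _ _ => Nat.sub_le _ _)
    (Finset.sum_le_sum fun _ _ => Nat.sub_le _ _)

namespace IsNChain

variable {Z Z' : Set (Fin k → ℕ)} {N : ℕ} {a b c : Fin k → ℕ}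

theorem refl (ha : a ∈ Z) : IsNChain Z N a a :=
  ⟨[a], rfl, rfl, by simpa using ha, List.isChain_singleton a⟩

theorem of_fdist_le (ha : a ∈ Z) (hb : b ∈ Z) (hab : fdist a b ≤ N) : IsNChain Z N a b :=
  ⟨[a, b], rfl, rfl, by simp [ha, hb], List.isChain_pair.mpr hab⟩

theorem trans (hab : IsNChain Z N a b) (hbc : IsNChain Z N b c) : IsNChain Z N a c := by
  obtain ⟨l₁, hh₁, hl₁, hm₁, hc₁⟩ := hab
  obtain ⟨l₂, hh₂, hl₂, hm₂, hc₂⟩ := hbc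
  have hne₁ : l₁ ≠ [] := by rintro rfl; simp at hh₁
  have hne₂ : l₂ ≠ [] := by rintro rfl; simp at hh₂
  refine ⟨l₁ ++ l₂, by rwa [List.head?_append_of_ne_nil _ hne₁],
    by rwa [List.getLast?_append_of_ne_nil _ hne₂], fun x hx => ?_,
    List.isChain_append.mpr ⟨hc₁, hc₂, ?_⟩⟩
  · rcases List.mem_append.mp hx with hx | hx
    exacts [hm₁ x hx, hm₂ x hx]
  · intro x hx y hy
    rw [hl₁, Option.mem_some_iff] at hx
    rw [hh₂, Option.mem_some_iff] at hy
    subst hx hy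
    simp [fdist_self]

theorem mono {N' : ℕ} (hN : N ≤ N') (h : IsNChain Z N a b) : IsNChain Z N' a b := by
  obtain ⟨l, hh, hl, hm, hc⟩ := h
  exact ⟨l, hh, hl, hm, hc.imp fun _ _ hxy => hxy.trans hN⟩

theorem add_right (w : Fin k → ℕ) (hZ : ∀ x ∈ Z, x + w ∈ Z') (h : IsNChain Z N a b) :
    IsNChain Z' N (a + w) (b + w) := by
  obtain ⟨l, hh, hl, hm, hc⟩ := h
  refine ⟨l.map (· + w), by simp [hh], by simp [List.getLast?_map, hl], ?_, ?_⟩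
  · simp only [List.mem_map]
    rintro _ ⟨x, hx, rfl⟩
    exact hZ x (hm x hx)
  · exact List.isChain_map_of_isChain _ (fun x y hxy => by rwa [fdist_add_right]) hc

theorem eq_of_isolated (hiso : ∀ y ∈ Z, fdist a y ≤ N → y = a) (h : IsNChain Z N a b) :
    b = a := by
  obtain ⟨l, hh, hl, hm, hc⟩ := h
  induction l generalizing a with
  | nil => simp at hh
  | cons x t ih =>
    obtain rfl : x = a := by simpa using hh
    cases t with
    | nil => simpa using hl.symm
    | cons y t =>
      obtain ⟨hxy, hc'⟩ := List.isChain_cons_cons.mp hc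
      obtain rfl := hiso y (hm y (by simp)) hxy
      exact ih hiso rfl hl (fun u hu => hm u (List.mem_cons_of_mem _ hu)) hc'

end IsNChain

section Factorizations

variable {S : Type*} [AddCancelCommMonoid S] {gens : Fin k → S} {m n : S}
  {a b x y z ζ w : Fin k → ℕ}

theorem mem_ZsetM : a ∈ ZsetM gens n ↔ ∑ i, a i • gens i = n := Iff.rfl

theorem mem_ZsetM_sum (a : Fin k → ℕ) : a ∈ ZsetM gens (∑ i, a i • gens i) := rfl

theorem add_mem_ZsetM (ha : a ∈ ZsetM gens m) (hb : b ∈ ZsetM gens n) :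
    a + b ∈ ZsetM gens (m + n) := by
  rw [mem_ZsetM] at ha hb ⊢
  simp only [Pi.add_apply, add_smul, Finset.sum_add_distrib, ha, hb]

theorem sum_add_smul (a b : Fin k → ℕ) :
    ∑ i, (a + b) i • gens i = ∑ i, a i • gens i + ∑ i, b i • gens i :=
  add_mem_ZsetM (mem_ZsetM_sum a) (mem_ZsetM_sum b)

/-- `x - y` and `y - x` are `x` and `y` with their common part `x ⊓ y` removed. -/
theorem sub_mem_ZsetM_sum_sub (hx : x ∈ ZsetM gens n) (hy : y ∈ ZsetM gens n) :
    y - x ∈ ZsetM gens (∑ i, (x - y) i • gens i) := by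
  rw [mem_ZsetM, ← tsub_add_inf_eq x y, sum_add_smul] at hx
  rw [mem_ZsetM, ← tsub_add_inf_eq y x, inf_comm, sum_add_smul] at hy
  exact add_right_cancel (hy.trans hx.symm)

theorem add_inf_mem_ZsetM (hx : x ∈ ZsetM gens n)
    (hζ : ζ ∈ ZsetM gens (∑ i, (x - y) i • gens i)) : ζ + x ⊓ y ∈ ZsetM gens n := by
  have := add_mem_ZsetM hζ (mem_ZsetM_sum (x ⊓ y))
  rwa [← sum_add_smul, tsub_add_inf_eq, mem_ZsetM.mp hx] at this

end Factorizations

section Catenary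

variable {S : Type*} [AddCancelCommMonoid S] (gens : Fin k → S)

def NChainConnected (n : S) (N : ℕ) : Prop :=
  ∀ a ∈ ZsetM gens n, ∀ b ∈ ZsetM gens n, IsNChain (ZsetM gens n) N a b

variable {gens} {n : S} {N N' B : ℕ} {z : Fin k → ℕ}

theorem NChainConnected.mono (h : NChainConnected gens n N) (hN : N ≤ N') :
    NChainConnected gens n N' :=
  fun a ha b hb => (h a ha b hb).mono hN

theorem NChainConnected.catDegM_le (h : NChainConnected gens n N) : catDegM gens n ≤ N :=
  Nat.sInf_le h

theorem NChainConnected.catDegM (h : NChainConnected gens n N) :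
    NChainConnected gens n (catDegM gens n) :=
  Nat.sInf_mem (s := {N | NChainConnected gens n N}) ⟨N, h⟩

theorem nChainConnected_of_flen_le (hB : ∀ z ∈ ZsetM gens n, flen z ≤ B) :
    NChainConnected gens n B :=
  fun a ha b hb => .of_fdist_le ha hb ((fdist_le_max_flen a b).trans (max_le (hB a ha) (hB b hb)))

theorem catDegM_le_flen (hmax : ∀ y ∈ ZsetM gens n, flen y ≤ flen z) :
    catDegM gens n ≤ flen z :=
  (nChainConnected_of_flen_le hmax).catDegM_le

theorem nChainConnected_zero_iff : NChainConnected gens n 0 ↔ (ZsetM gens n).Subsingleton :=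
  ⟨fun h a ha b hb => ((h a ha b hb).eq_of_isolated fun _ _ hd =>
      (eq_of_fdist_eq_zero (Nat.le_zero.mp hd)).symm).symm,
    fun h _ ha _ hb => h ha hb ▸ .refl ha⟩

theorem IsBettiM.nontrivial (h : IsBettiM gens n) : (ZsetM gens n).Nontrivial := by
  obtain ⟨a, ha, b, hb, hab⟩ := h
  exact ⟨a, ha, b, hb, by rintro rfl; exact hab .refl⟩

theorem reflTransGen_of_not_isBettiM (hn : ¬IsBettiM gens n) {a b : Fin k → ℕ}
    (ha : a ∈ ZsetM gens n) (hb : b ∈ ZsetM gens n) :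
    ReflTransGen
      (fun x y => x ∈ ZsetM gens n ∧ y ∈ ZsetM gens n ∧ ∃ i, min (x i) (y i) ≠ 0) a b :=
  not_not.mp fun h => hn ⟨a, ha, b, hb, h⟩

theorem flen_lt_of_mem_ZsetM_sum_sub {x y : Fin k → ℕ} {i : Fin k}
    (hB : ∀ z ∈ ZsetM gens n, flen z ≤ B) (hx : x ∈ ZsetM gens n)
    (hi : min (x i) (y i) ≠ 0) :
    ∀ ζ ∈ ZsetM gens (∑ j, (x - y) j • gens j), flen ζ < B := by
  intro ζ hζ
  have hlen := hB _ (add_inf_mem_ZsetM hx hζ)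
  have hcommon := apply_le_flen (x ⊓ y) i
  rw [flen_add] at hlen
  rw [Pi.inf_apply] at hcommon
  omega

theorem nChainConnected_of_forall_isBettiM {c : ℕ}
    (hbetti : ∀ m, IsBettiM gens m → NChainConnected gens m c) (B : ℕ) :
    ∀ n, (∀ z ∈ ZsetM gens n, flen z ≤ B) → NChainConnected gens n c := by
  induction B using Nat.strong_induction_on with
  | _ B ih =>
  intro n hB
  by_cases hn : IsBettiM gens n
  · exact hbetti n hn
  intro a ha b hb
  have hab := reflTransGen_of_not_isBettiM hn ha hb
  clear hb
  induction hab with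
  | refl => exact .refl ha
  | @tail x y _ hxy hax =>
    obtain ⟨hx, hy, i, hi⟩ := hxy
    have hlt := flen_lt_of_mem_ZsetM_sum_sub hB hx hi
    have hpos := hlt _ (mem_ZsetM_sum _)
    have hrest := ih (B - 1) (by omega) _ (fun ζ hζ => Nat.le_sub_one_of_lt (hlt ζ hζ))
      _ (mem_ZsetM_sum _) _ (sub_mem_ZsetM_sum_sub hx hy)
    have hxy := hrest.add_right (x ⊓ y) fun ζ hζ => add_inf_mem_ZsetM hx hζ
    rw [tsub_add_inf_eq, inf_comm, tsub_add_inf_eq] at hxy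
    exact hax.trans hxy

theorem exists_isBettiM_add (B : ℕ) :
    ∀ n, (∀ z ∈ ZsetM gens n, flen z ≤ B) → (ZsetM gens n).Nontrivial →
      ∃ b, IsBettiM gens b ∧ ∃ w : Fin k → ℕ, n = b + ∑ i, w i • gens i := by
  induction B using Nat.strong_induction_on with
  | _ B ih =>
  intro n hB hn
  by_cases hbetti : IsBettiM gens n
  · exact ⟨n, hbetti, 0, by simp⟩
  obtain ⟨p, hp, q, hq, hpq⟩ := hn
  obtain ⟨x, y, ⟨hx, hy, i, hi⟩, hxy⟩ :=
    (reflTransGen_of_not_isBettiM hbetti hp hq).exists_rel_ne hpq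
  have hlt := flen_lt_of_mem_ZsetM_sum_sub hB hx hi
  have hpos := hlt _ (mem_ZsetM_sum _)
  obtain ⟨b, hb, w, hw⟩ := ih (B - 1) (by omega) _
    (fun ζ hζ => Nat.le_sub_one_of_lt (hlt ζ hζ))
    ⟨_, mem_ZsetM_sum _, _, sub_mem_ZsetM_sum_sub hx hy, tsub_ne_tsub_of_ne hxy⟩
  refine ⟨b, hb, w + x ⊓ y, ?_⟩
  rw [sum_add_smul, ← add_assoc, ← hw, ← sum_add_smul, tsub_add_inf_eq, mem_ZsetM.mp hx]

end Catenary

section Atomic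

variable {S : Type*} [AddCancelCommMonoid S] {gens : Fin k → S}

theorem gens_ne_zero
    (hatom : ∀ i, ∀ a : Fin k → ℕ, ∑ j, a j • gens j = gens i → a = Pi.single i 1)
    (i : Fin k) : gens i ≠ 0 := fun h => by
  simpa using congrFun (hatom i 0 (by simp [h])) i

theorem eq_zero_of_mem_ZsetM_zero (hred : ∀ a b : S, a + b = 0 → a = 0)
    (hatom : ∀ i, ∀ a : Fin k → ℕ, ∑ j, a j • gens j = gens i → a = Pi.single i 1)
    {z : Fin k → ℕ} (hz : z ∈ ZsetM gens 0) : z = 0 := by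
  funext i
  by_contra hi
  have hterm : z i • gens i = 0 :=
    hred _ (∑ j ∈ Finset.univ.erase i, z j • gens j)
      (by rw [Finset.add_sum_erase _ (fun j => z j • gens j) (Finset.mem_univ i)]; exact hz)
  obtain ⟨n, hn⟩ := Nat.exists_eq_succ_of_ne_zero hi
  rw [hn, succ_nsmul'] at hterm
  exact gens_ne_zero hatom i (hred _ _ hterm)

/-- The factorizations of `n` form an antichain in `ℕ^k`, hence a finite set (Dickson). -/
theorem ZsetM_finite (hred : ∀ a b : S, a + b = 0 → a = 0)
    (hatom : ∀ i, ∀ a : Fin k → ℕ, ∑ j, a j • gens j = gens i → a = Pi.single i 1)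
    (n : S) : (ZsetM gens n).Finite := by
  refine IsAntichain.finite_of_partiallyWellOrderedOn (fun x hx y hy hxy hle => hxy ?_)
    (Set.isPWO_of_wellQuasiOrderedLE _)
  have h0 := sub_mem_ZsetM_sum_sub hx hy
  rw [tsub_eq_zero_of_le hle] at h0
  simp only [Pi.zero_apply, zero_smul, Finset.sum_const_zero] at h0
  exact le_antisymm hle (tsub_eq_zero_iff_le.mp (eq_zero_of_mem_ZsetM_zero hred hatom h0))

end Atomic

section FiniteFactorization

variable {S : Type*} [AddCancelCommMonoid S] {gens : Fin k → S}
  (hfin : ∀ n : S, (ZsetM gens n).Finite)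
include hfin

theorem exists_flen_bound (n : S) : ∃ B, ∀ z ∈ ZsetM gens n, flen z ≤ B := by
  obtain ⟨B, hB⟩ := ((hfin n).image flen).bddAbove
  exact ⟨B, fun z hz => hB ⟨z, hz, rfl⟩⟩

theorem catDegM_eq_zero_iff {n : S} : catDegM gens n = 0 ↔ (ZsetM gens n).Subsingleton := by
  obtain ⟨B, hB⟩ := exists_flen_bound hfin n
  rw [← nChainConnected_zero_iff]
  exact ⟨fun h => h ▸ (nChainConnected_of_flen_le hB).catDegM,
    fun h => Nat.le_zero.mp h.catDegM_le⟩

theorem catDegM_le_of_forall_isBettiM {c : ℕ}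
    (h : ∀ m, IsBettiM gens m → catDegM gens m ≤ c) (n : S) :
    catDegM gens n ≤ c := by
  obtain ⟨B, hB⟩ := exists_flen_bound hfin n
  refine (nChainConnected_of_forall_isBettiM (fun m hm => ?_) B n hB).catDegM_le
  obtain ⟨Bm, hBm⟩ := exists_flen_bound hfin m
  exact (nChainConnected_of_flen_le hBm).catDegM.mono (h m hm)

theorem le_fdist_of_forall_isBettiM {c : ℕ} (h : ∀ m, IsBettiM gens m → c ≤ catDegM gens m)
    {n : S} {y z : Fin k → ℕ} (hz : z ∈ ZsetM gens n)
    (hmax : ∀ x ∈ ZsetM gens n, flen x ≤ flen z) (hy : y ∈ ZsetM gens n) (hyz : y ≠ z) :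
    c ≤ fdist z y := by
  obtain ⟨B, hB⟩ := exists_flen_bound hfin (∑ i, (z - y) i • gens i)
  obtain ⟨b, hb, w, hw⟩ := exists_isBettiM_add B _ hB
    ⟨_, mem_ZsetM_sum _, _, sub_mem_ZsetM_sum_sub hz hy, tsub_ne_tsub_of_ne hyz.symm⟩
  obtain ⟨ζ, hζ, hζmax⟩ := Set.exists_max_image _ flen (hfin b) hb.nontrivial.nonempty
  have hlift : ζ + w + z ⊓ y ∈ ZsetM gens n :=
    add_inf_mem_ZsetM hz (hw ▸ add_mem_ZsetM hζ (mem_ZsetM_sum w))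
  have hlen := hmax _ hlift
  have hzlen : flen z = flen (z - y) + flen (z ⊓ y) := by rw [← flen_add, tsub_add_inf_eq]
  rw [flen_add, flen_add] at hlen
  calc c ≤ catDegM gens b := h b hb
    _ ≤ flen ζ := catDegM_le_flen hζmax
    _ ≤ flen (z - y) := by omega
    _ ≤ fdist z y := le_max_left _ _

theorem le_catDegM_of_forall_isBettiM {c : ℕ}
    (h : ∀ m, IsBettiM gens m → c ≤ catDegM gens m) {n : S}
    (hn : (ZsetM gens n).Nontrivial) : c ≤ catDegM gens n := by
  obtain ⟨z, hz, hmax⟩ := Set.exists_max_image _ flen (hfin n) hn.nonempty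
  obtain ⟨y, hy, hyz⟩ := hn.exists_ne z
  obtain ⟨B, hB⟩ := exists_flen_bound hfin n
  by_contra! hlt
  refine hyz (((nChainConnected_of_flen_le hB).catDegM z hz y hy).eq_of_isolated fun x hx hd => ?_)
  by_contra hxz
  have := le_fdist_of_forall_isBettiM hfin h hz hmax hx hxz
  omega

end FiniteFactorization

theorem catSet_pair_iff_general {S : Type*} [AddCancelCommMonoid S] {k : ℕ}
    (gens : Fin k → S)
    (hred : ∀ a b : S, a + b = 0 → a = 0)
    (hatom : ∀ i, ∀ a : Fin k → ℕ, ∑ j, a j • gens j = gens i → a = Pi.single i 1)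
    (hbetti : ∃ m : S, IsBettiM gens m) :
    ∀ c : ℕ, 0 < c →
      ({x | ∃ m : S, catDegM gens m = x} = {0, c} ↔
        ∀ m : S, IsBettiM gens m → catDegM gens m = c) := by
  intro c _
  have hfin := ZsetM_finite hred hatom
  constructor
  · intro hset m hm
    have hmem : catDegM gens m ∈ ({0, c} : Set ℕ) := hset ▸ ⟨m, rfl⟩
    rcases hmem with h0 | hc
    · exact absurd ((catDegM_eq_zero_iff hfin).mp h0) hm.nontrivial.not_subsingleton
    · exact hc
  · intro hc
    ext x
    constructor
    · rintro ⟨m, rfl⟩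
      rcases (ZsetM gens m).subsingleton_or_nontrivial with hm | hm
      · exact .inl ((catDegM_eq_zero_iff hfin).mpr hm)
      · exact .inr (le_antisymm (catDegM_le_of_forall_isBettiM hfin (fun b hb => (hc b hb).le) m)
          (le_catDegM_of_forall_isBettiM hfin (fun b hb => (hc b hb).ge) hm))
    · rintro (rfl | rfl)
      · exact ⟨0, (catDegM_eq_zero_iff hfin).mpr fun a ha b hb =>
          (eq_zero_of_mem_ZsetM_zero hred hatom ha).trans
            (eq_zero_of_mem_ZsetM_zero hred hatom hb).symm⟩
      · obtain ⟨m, hm⟩ := hbetti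
        exact ⟨m, hc m hm⟩

/-- C(S) = {0, c} for c > 0 if and only if every Betti element of S has
catenary degree c (for S not factorial, i.e. having a Betti element). -/
theorem catSet_pair_iff {S : Type*} [AddCancelCommMonoid S] {k : ℕ}
    (gens : Fin k → S)
    (hred : ∀ a b : S, a + b = 0 → a = 0)
    (hgen : ∀ s : S, ∃ a : Fin k → ℕ, ∑ i, a i • gens i = s)
    (hatom : ∀ i, ∀ a : Fin k → ℕ, ∑ j, a j • gens j = gens i → a = Pi.single i 1)
    (hbetti : ∃ m : S, IsBettiM gens m) :
    ∀ c : ℕ, 0 < c →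
      ({x | ∃ m : S, catDegM gens m = x} = {0, c} ↔
        ∀ m : S, IsBettiM gens m → catDegM gens m = c) :=
  catSet_pair_iff_general gens hred hatom hbetti
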